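/- Let T_R, T_B be finite nonempty sets in ℝ^d with conv(T_R) ∩ conv(T_B) = ∅, let h be the unique maximum-margin separator of T = T_R ∪ T_B and M = Mar(T) its separation-margin, and let C = {a ∈ T : dist(a, h) = M} be the support set of T, with C_R = C ∩ T_R and C_B = C ∩ T_B. Then C_R and C_B are nonempty, the bichromatic dataset C (with colors C_R, C_B) has the same maximum-margin separator h and the same separation-margin M as T, and the support set of C equals C itself. -/

import Mathlib

open scoped RealInnerProductSpace

/-- The hyperplane `{x : ⟪w, x⟫ = c}`. -/
def hplane (d : ℕ) (w : EuclideanSpace ℝ (Fin d)) (c : ℝ) :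
    Set (EuclideanSpace ℝ (Fin d)) :=
  {x | ⟪w, x⟫ = c}

/-- The margin `M_h(T) = min_{a ∈ T} dist(a, h)` of a hyperplane `h` w.r.t. a set `T`. -/
noncomputable def margin (d : ℕ) (T h : Set (EuclideanSpace ℝ (Fin d))) : ℝ :=
  sInf ((fun a => Metric.infDist a h) '' T)

/-- `(w, c)` strictly separates the red set `VR` from the blue set `VB`. -/
def StrictSep (d : ℕ) (VR VB : Set (EuclideanSpace ℝ (Fin d)))
    (w : EuclideanSpace ℝ (Fin d)) (c : ℝ) : Prop :=
  (∀ r ∈ VR, ⟪w, r⟫ < c) ∧ ∀ b ∈ VB, c < ⟪w, b⟫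

/-! The proof is a perturbation argument. Every point of `T` lies at distance at least `M`
from `h`, with equality exactly on `C`. Move `h` slightly, by translating it towards one colour
or by tilting it towards a separator of `C`: points off `C` keep their strict slack (finitely
many of them), so if each support point gains distance, the moved plane separates `T` with a
margin larger than `M`, which is impossible. Translation shows that both colours meet `C`, and
tilting shows that no separator of `C` has a margin larger than `M`. -/

open Filter Topology

theorem infDist_setOf_inner_eq {E : Type*} [NormedAddCommGroup E] [InnerProductSpace ℝ E]
    {w : E} (hw : w ≠ 0) (c : ℝ) (x : E) :
    Metric.infDist x {y | ⟪w, y⟫ = c} = |⟪w, x⟫ - c| / ‖w‖ := by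
  have hw0 : 0 < ‖w‖ := norm_pos_iff.mpr hw
  set p := x - ((⟪w, x⟫ - c) / ‖w‖ ^ 2) • w
  have hp : ⟪w, p⟫ = c := by
    simp only [p, inner_sub_right, inner_smul_right, real_inner_self_eq_norm_sq]
    field_simp
    ring
  refine le_antisymm ?_ ((Metric.le_infDist ⟨p, hp⟩).mpr fun y (hy : ⟪w, y⟫ = c) => ?_)
  · calc Metric.infDist x {y | ⟪w, y⟫ = c} ≤ dist x p := Metric.infDist_le_dist_of_mem hp
      _ = |⟪w, x⟫ - c| / ‖w‖ := by
        rw [dist_eq_norm, sub_sub_cancel, norm_smul, Real.norm_eq_abs, abs_div, abs_pow,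
          abs_norm]
        field_simp
  · rw [div_le_iff₀ hw0, dist_eq_norm, ← hy, ← inner_sub_right, mul_comm]
    exact abs_real_inner_le_norm w (x - y)

theorem eventually_pos_add_mul {ι : Type*} {S : Set ι} (hS : S.Finite) {f g : ι → ℝ}
    (hf : ∀ i ∈ S, 0 ≤ f i) (hg : ∀ i ∈ S, f i = 0 → 0 < g i) :
    ∀ᶠ s in 𝓝[>] (0 : ℝ), ∀ i ∈ S, 0 < f i + s * g i := by
  refine hS.eventually_all.mpr fun i hi => ?_
  rcases (hf i hi).eq_or_lt with hzero | hpos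
  · filter_upwards [self_mem_nhdsWithin] with s (hs : 0 < s)
    rw [← hzero, zero_add]
    exact mul_pos hs (hg i hi hzero.symm)
  · have hlim : Tendsto (fun s : ℝ => f i + s * g i) (𝓝[>] 0) (𝓝 (f i)) := by
      have := (continuous_const.add (continuous_id.mul continuous_const)).tendsto'
        (0 : ℝ) (f i) (by simp : f i + 0 * g i = f i)
      exact this.mono_left nhdsWithin_le_nhds
    exact hlim.eventually_const_lt hpos

section Margin

variable {d : ℕ}

theorem infDist_hplane {w : EuclideanSpace ℝ (Fin d)} (hw : w ≠ 0) (c : ℝ)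
    (x : EuclideanSpace ℝ (Fin d)) :
    Metric.infDist x (hplane d w c) = |⟪w, x⟫ - c| / ‖w‖ :=
  infDist_setOf_inner_eq hw c x

theorem infDist_hplane_of_inner_lt {w x : EuclideanSpace ℝ (Fin d)} {c : ℝ} (hw : w ≠ 0)
    (hx : ⟪w, x⟫ < c) : Metric.infDist x (hplane d w c) = (c - ⟪w, x⟫) / ‖w‖ := by
  rw [infDist_hplane hw, abs_sub_comm, abs_of_pos (sub_pos.mpr hx)]

theorem infDist_hplane_of_lt_inner {w x : EuclideanSpace ℝ (Fin d)} {c : ℝ} (hw : w ≠ 0)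
    (hx : c < ⟪w, x⟫) : Metric.infDist x (hplane d w c) = (⟪w, x⟫ - c) / ‖w‖ := by
  rw [infDist_hplane hw, abs_of_pos (sub_pos.mpr hx)]

theorem margin_nonneg (T H : Set (EuclideanSpace ℝ (Fin d))) : 0 ≤ margin d T H :=
  Real.sInf_nonneg <| Set.forall_mem_image.mpr fun _ _ => Metric.infDist_nonneg

theorem margin_le_infDist {T : Set (EuclideanSpace ℝ (Fin d))} (hT : T.Finite)
    (H : Set (EuclideanSpace ℝ (Fin d))) {a : EuclideanSpace ℝ (Fin d)} (ha : a ∈ T) :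
    margin d T H ≤ Metric.infDist a H :=
  csInf_le (hT.image _).bddBelow ⟨a, ha, rfl⟩

theorem lt_margin {T : Set (EuclideanSpace ℝ (Fin d))} (hT : T.Finite) (hne : T.Nonempty)
    {H : Set (EuclideanSpace ℝ (Fin d))} {m : ℝ} (h : ∀ a ∈ T, m < Metric.infDist a H) :
    m < margin d T H := by
  obtain ⟨a, ha, hmin⟩ := (hne.image (Metric.infDist · H)).csInf_mem (hT.image _)
  rw [margin, ← hmin]
  exact h a ha

theorem margin_eq_of_forall_infDist_eq {T H : Set (EuclideanSpace ℝ (Fin d))}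
    (hne : T.Nonempty) {m : ℝ} (h : ∀ a ∈ T, Metric.infDist a H = m) : margin d T H = m := by
  rw [margin, Set.image_congr h, hne.image_const, csInf_singleton]

theorem StrictSep.mono {VR VB VR' VB' : Set (EuclideanSpace ℝ (Fin d))}
    {w : EuclideanSpace ℝ (Fin d)} {c : ℝ} (h : StrictSep d VR VB w c) (hR : VR' ⊆ VR)
    (hB : VB' ⊆ VB) : StrictSep d VR' VB' w c :=
  ⟨fun r hr => h.1 r (hR hr), fun b hb => h.2 b (hB hb)⟩

theorem StrictSep.ne_zero {VR VB : Set (EuclideanSpace ℝ (Fin d))}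
    {w : EuclideanSpace ℝ (Fin d)} {c : ℝ} (h : StrictSep d VR VB w c) (hR : VR.Nonempty)
    (hB : VB.Nonempty) : w ≠ 0 := by
  rintro rfl
  obtain ⟨r, hr⟩ := hR
  obtain ⟨b, hb⟩ := hB
  have := h.1 r hr
  have := h.2 b hb
  simp only [inner_zero_left] at *
  linarith

theorem strictSep_and_lt_margin_of_gap {TR TB : Set (EuclideanSpace ℝ (Fin d))}
    (hRfin : TR.Finite) (hBfin : TB.Finite) (hR : TR.Nonempty) (hB : TB.Nonempty)
    {w : EuclideanSpace ℝ (Fin d)} {c m : ℝ} (hm : 0 ≤ m)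
    (hred : ∀ r ∈ TR, m * ‖w‖ < c - ⟪w, r⟫) (hblue : ∀ b ∈ TB, m * ‖w‖ < ⟪w, b⟫ - c) :
    StrictSep d TR TB w c ∧ m < margin d (TR ∪ TB) (hplane d w c) := by
  have hmw : 0 ≤ m * ‖w‖ := by positivity
  have hsep : StrictSep d TR TB w c :=
    ⟨fun r hr => by linarith [hred r hr], fun b hb => by linarith [hblue b hb]⟩
  have hw := hsep.ne_zero hR hB
  refine ⟨hsep, lt_margin (hRfin.union hBfin) hR.inl fun a ha => ?_⟩
  rcases ha with hr | hb
  · rw [infDist_hplane_of_inner_lt hw (hsep.1 a hr), lt_div_iff₀ (norm_pos_iff.mpr hw)]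
    exact hred a hr
  · rw [infDist_hplane_of_lt_inner hw (hsep.2 a hb), lt_div_iff₀ (norm_pos_iff.mpr hw)]
    exact hblue a hb

/-- First-order optimality of a maximum-margin separator `(w, c)`: moving it in any direction
`(v, e)` fails to gain margin at some support point. -/
theorem exists_support_point_blocking_perturbation {TR TB : Set (EuclideanSpace ℝ (Fin d))}
    (hRfin : TR.Finite) (hBfin : TB.Finite) (hR : TR.Nonempty) (hB : TB.Nonempty)
    {w : EuclideanSpace ℝ (Fin d)} {c M : ℝ} (hsep : StrictSep d TR TB w c)
    (hmax : ∀ (w' : EuclideanSpace ℝ (Fin d)) (c' : ℝ), w' ≠ 0 → StrictSep d TR TB w' c' →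
      margin d (TR ∪ TB) (hplane d w' c') ≤ margin d (TR ∪ TB) (hplane d w c))
    (hM : M = margin d (TR ∪ TB) (hplane d w c)) (v : EuclideanSpace ℝ (Fin d)) (e : ℝ) :
    (∃ r ∈ TR, Metric.infDist r (hplane d w c) = M ∧ e - ⟪v, r⟫ ≤ M * ‖v‖) ∨
      ∃ b ∈ TB, Metric.infDist b (hplane d w c) = M ∧ ⟪v, b⟫ - e ≤ M * ‖v‖ := by
  by_contra! h
  obtain ⟨hred, hblue⟩ := h
  have hw := hsep.ne_zero hR hB
  have hw0 : 0 < ‖w‖ := norm_pos_iff.mpr hw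
  have hM0 : 0 ≤ M := hM ▸ margin_nonneg _ _
  have hMle : ∀ a ∈ TR ∪ TB, M ≤ Metric.infDist a (hplane d w c) :=
    fun a ha => hM ▸ margin_le_infDist (hRfin.union hBfin) _ ha
  have evR : ∀ᶠ s in 𝓝[>] (0 : ℝ), ∀ r ∈ TR,
      0 < (c - ⟪w, r⟫ - M * ‖w‖) + s * (e - ⟪v, r⟫ - M * ‖v‖) := by
    refine eventually_pos_add_mul hRfin (fun r hr => ?_) (fun r hr hzero => ?_) <;>
      have hdist := infDist_hplane_of_inner_lt hw (hsep.1 r hr)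
    · have := hMle r (Or.inl hr)
      rw [hdist, le_div_iff₀ hw0] at this
      linarith
    · have := hred r hr (by rw [hdist, div_eq_iff hw0.ne']; linarith)
      linarith
  have evB : ∀ᶠ s in 𝓝[>] (0 : ℝ), ∀ b ∈ TB,
      0 < (⟪w, b⟫ - c - M * ‖w‖) + s * (⟪v, b⟫ - e - M * ‖v‖) := by
    refine eventually_pos_add_mul hBfin (fun b hb => ?_) (fun b hb hzero => ?_) <;>
      have hdist := infDist_hplane_of_lt_inner hw (hsep.2 b hb)
    · have := hMle b (Or.inr hb)
      rw [hdist, le_div_iff₀ hw0] at this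
      linarith
    · have := hblue b hb (by rw [hdist, div_eq_iff hw0.ne']; linarith)
      linarith
  obtain ⟨s, ⟨hsR, hsB⟩, hs : 0 < s⟩ := ((evR.and evB).and self_mem_nhdsWithin).exists
  have hnorm : M * ‖w + s • v‖ ≤ M * ‖w‖ + s * (M * ‖v‖) := by
    calc M * ‖w + s • v‖ ≤ M * (‖w‖ + s * ‖v‖) := by
          gcongr
          exact (norm_add_le _ _).trans_eq (by rw [norm_smul, Real.norm_of_nonneg hs.le])
      _ = M * ‖w‖ + s * (M * ‖v‖) := by ring
  have hinner : ∀ a, ⟪w + s • v, a⟫ = ⟪w, a⟫ + s * ⟪v, a⟫ := fun a => by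
    rw [inner_add_left, real_inner_smul_left]
  obtain ⟨hsep', hlt⟩ := strictSep_and_lt_margin_of_gap (c := c + s * e) hRfin hBfin hR hB hM0
    (fun r hr => by rw [hinner]; linarith [hsR r hr])
    (fun b hb => by rw [hinner]; linarith [hsB b hb])
  exact (hmax _ _ (hsep'.ne_zero hR hB) hsep').not_gt (hM ▸ hlt)

end Margin

theorem stmt_10_general (d : ℕ) (TR TB : Finset (EuclideanSpace ℝ (Fin d)))
    (hR : TR.Nonempty) (hB : TB.Nonempty)
    (w : EuclideanSpace ℝ (Fin d)) (c M : ℝ)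
    (hsep : StrictSep d ↑TR ↑TB w c)
    -- `hplane d w c` is the maximum-margin separator of `T` …
    (hmax : ∀ (w' : EuclideanSpace ℝ (Fin d)) (c' : ℝ), w' ≠ 0 →
      StrictSep d ↑TR ↑TB w' c' →
      margin d (↑TR ∪ ↑TB) (hplane d w' c') ≤ margin d (↑TR ∪ ↑TB) (hplane d w c))
    (hM : M = margin d (↑TR ∪ ↑TB) (hplane d w c))
    -- the support set of `T` and its two color classes
    (C CR CB : Set (EuclideanSpace ℝ (Fin d)))
    (hC : C = {a ∈ (↑TR ∪ ↑TB : Set (EuclideanSpace ℝ (Fin d))) |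
      Metric.infDist a (hplane d w c) = M})
    (hCR : CR = C ∩ ↑TR) (hCB : CB = C ∩ ↑TB) :
    CR.Nonempty ∧ CB.Nonempty ∧
    -- `h` strictly separates `C` and realizes the same margin `M` on `C` …
    StrictSep d CR CB w c ∧
    margin d C (hplane d w c) = M ∧
    -- … it is the maximum-margin separator of `C`, with `Mar(C) = M` …
    (∀ (w' : EuclideanSpace ℝ (Fin d)) (c' : ℝ), w' ≠ 0 → StrictSep d CR CB w' c' →
      margin d C (hplane d w' c') ≤ M) ∧
    -- … and the support set of `C` equals `C`.
    {a ∈ C | Metric.infDist a (hplane d w c) = M} = C := by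
  subst hCR hCB
  have key := exists_support_point_blocking_perturbation TR.finite_toSet TB.finite_toSet
    (Finset.coe_nonempty.mpr hR) (Finset.coe_nonempty.mpr hB) hsep hmax hM
  have hCdist : ∀ a ∈ C, Metric.infDist a (hplane d w c) = M := fun a ha => (hC ▸ ha).2
  have hCR : (C ∩ TR).Nonempty := by
    rcases key 0 (-1) with ⟨r, hr, hrM, -⟩ | ⟨b, -, -, hb⟩
    · exact ⟨r, hC ▸ ⟨Or.inl hr, hrM⟩, hr⟩
    · norm_num at hb
  have hCB : (C ∩ TB).Nonempty := by
    rcases key 0 1 with ⟨r, -, -, hr⟩ | ⟨b, hb, hbM, -⟩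
    · norm_num at hr
    · exact ⟨b, hC ▸ ⟨Or.inr hb, hbM⟩, hb⟩
  refine ⟨hCR, hCB, hsep.mono Set.inter_subset_right Set.inter_subset_right,
    margin_eq_of_forall_infDist_eq (hCR.mono Set.inter_subset_left) hCdist,
    fun w' c' hw' hsep' => ?_, Set.sep_eq_self_iff_mem_true.mpr hCdist⟩
  have hCfin : C.Finite := hC ▸ (TR.finite_toSet.union TB.finite_toSet).sep _
  have hM0 : 0 ≤ M := hM ▸ margin_nonneg _ _
  rcases key w' c' with ⟨r, hr, hrM, hle⟩ | ⟨b, hb, hbM, hle⟩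
  · have hrC : r ∈ C := hC ▸ ⟨Or.inl hr, hrM⟩
    calc margin d C (hplane d w' c') ≤ Metric.infDist r (hplane d w' c') :=
          margin_le_infDist hCfin _ hrC
      _ = (c' - ⟪w', r⟫) / ‖w'‖ := infDist_hplane_of_inner_lt hw' (hsep'.1 r ⟨hrC, hr⟩)
      _ ≤ M := div_le_of_le_mul₀ (norm_nonneg _) hM0 hle
  · have hbC : b ∈ C := hC ▸ ⟨Or.inr hb, hbM⟩
    calc margin d C (hplane d w' c') ≤ Metric.infDist b (hplane d w' c') :=
          margin_le_infDist hCfin _ hbC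
      _ = (⟪w', b⟫ - c') / ‖w'‖ := infDist_hplane_of_lt_inner hw' (hsep'.2 b ⟨hbC, hb⟩)
      _ ≤ M := div_le_of_le_mul₀ (norm_nonneg _) hM0 hle

/-- Let `h` be the maximum-margin separator of `T = T_R ∪ T_B`,
`M = Mar(T)`, and let `C = {a ∈ T : dist(a, h) = M}` be the support set, with colors
`C_R = C ∩ T_R` and `C_B = C ∩ T_B`.  Then `C_R, C_B` are nonempty, the dataset `C` has
the same maximum-margin separator `h` and separation-margin `M` as `T`, and the support
set of `C` is `C` itself. -/
theorem stmt_10 (d : ℕ) (TR TB : Finset (EuclideanSpace ℝ (Fin d)))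
    (hR : TR.Nonempty) (hB : TB.Nonempty)
    (hdisj : convexHull ℝ (TR : Set (EuclideanSpace ℝ (Fin d))) ∩
      convexHull ℝ (TB : Set (EuclideanSpace ℝ (Fin d))) = ∅)
    (w : EuclideanSpace ℝ (Fin d)) (c M : ℝ) (hw : w ≠ 0)
    (hsep : StrictSep d ↑TR ↑TB w c)
    -- `hplane d w c` is the maximum-margin separator of `T` …
    (hmax : ∀ (w' : EuclideanSpace ℝ (Fin d)) (c' : ℝ), w' ≠ 0 →
      StrictSep d ↑TR ↑TB w' c' →
      margin d (↑TR ∪ ↑TB) (hplane d w' c') ≤ margin d (↑TR ∪ ↑TB) (hplane d w c))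
    -- … and it is the unique one attaining the maximum margin
    (huniq : ∀ (w' : EuclideanSpace ℝ (Fin d)) (c' : ℝ), w' ≠ 0 →
      StrictSep d ↑TR ↑TB w' c' →
      margin d (↑TR ∪ ↑TB) (hplane d w' c') = margin d (↑TR ∪ ↑TB) (hplane d w c) →
      hplane d w' c' = hplane d w c)
    (hM : M = margin d (↑TR ∪ ↑TB) (hplane d w c))
    -- the support set of `T` and its two color classes
    (C CR CB : Set (EuclideanSpace ℝ (Fin d)))
    (hC : C = {a ∈ (↑TR ∪ ↑TB : Set (EuclideanSpace ℝ (Fin d))) |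
      Metric.infDist a (hplane d w c) = M})
    (hCR : CR = C ∩ ↑TR) (hCB : CB = C ∩ ↑TB) :
    CR.Nonempty ∧ CB.Nonempty ∧
    -- `h` strictly separates `C` and realizes the same margin `M` on `C` …
    StrictSep d CR CB w c ∧
    margin d C (hplane d w c) = M ∧
    -- … it is the maximum-margin separator of `C`, with `Mar(C) = M` …
    (∀ (w' : EuclideanSpace ℝ (Fin d)) (c' : ℝ), w' ≠ 0 → StrictSep d CR CB w' c' →
      margin d C (hplane d w' c') ≤ M) ∧
    -- … and the support set of `C` equals `C`.
    {a ∈ C | Metric.infDist a (hplane d w c) = M} = C :=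
  stmt_10_general d TR TB hR hB w c M hsep hmax hM C CR CB hC hCR hCB
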